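/- With the same setup, for any set S contained in the interval (R*(D')+b, R*(D)+b] (where P(R(D') ∈ S) = 0), using the symmetry of Z, P(R(D) ∈ S) ≤ P(Z < Δ − b) = G(Δ−1). Hence on such sets the mechanism satisfies the (0, G(Δ−1))-differential privacy inequality. -/

import Mathlib

/-!
Noise from `D'` lands at most `b` above `R*(D')`, so `S` is invisible from `D'`. Seen from `D`,
the noise needed to land in `S` lies in the top `Δ` values `(b - Δ, b]` of the support, and by
the symmetry of `Z` their total mass equals that of the bottom `Δ` values `[-b, Δ - 1 - b]`,
which the CDF gives as `G (Δ - 1)`.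
-/

open Finset

theorem sum_Icc_eq_sum_Icc_neg {M : Type*} [AddCommMonoid M] {p : ℤ → M}
    (hsym : ∀ z, p (-z) = p z) (a c : ℤ) :
    ∑ x ∈ Icc a c, p x = ∑ x ∈ Icc (-c) (-a), p x :=
  sum_nbij' (fun x => -x) (fun x => -x)
    (fun x hx => by simp only [mem_Icc] at hx ⊢; omega)
    (fun x hx => by simp only [mem_Icc] at hx ⊢; omega)
    (fun x _ => neg_neg x) (fun x _ => neg_neg x) (fun x _ => (hsym x).symm)

theorem sum_sub_le_sum_Icc {p : ℤ → ℝ} (hp : ∀ z, 0 ≤ p z) {S : Finset ℤ} {c lo hi : ℤ}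
    (hS : ∀ a ∈ S, lo ≤ a - c ∧ a - c ≤ hi) :
    ∑ a ∈ S, p (a - c) ≤ ∑ x ∈ Icc lo hi, p x := by
  rw [← sum_image (sub_left_injective.injOn : Set.InjOn (· - c) S)]
  refine sum_le_sum_of_subset_of_nonneg (fun x hx => ?_) fun x _ _ => hp x
  obtain ⟨a, ha, rfl⟩ := mem_image.mp hx
  exact mem_Icc.mpr (hS a ha)

theorem sum_Icc_upper_tail_eq {b k : ℕ} (hk : 1 ≤ k) (hkb : k ≤ b) {p : ℤ → ℝ}
    (hsym : ∀ z, p (-z) = p z) {G : ℕ → ℝ}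
    (hcdf : ∀ z : ℤ, -(b : ℤ) ≤ z → z ≤ 0 →
      (∑ x ∈ Icc (-(b : ℤ)) z, p x) = G (z + b).toNat) :
    ∑ x ∈ Icc ((b : ℤ) - k + 1) b, p x = G (k - 1) := by
  rw [sum_Icc_eq_sum_Icc_neg hsym, neg_add, neg_sub, hcdf _ (by omega) (by omega)]
  congr 1
  omega

theorem tap_dp_region_A4_general (b Δ : ℕ) (hbΔ : Δ ≤ b)
    (RD RD' : ℤ) (hlt : RD' < RD) (hsens : |RD - RD'| ≤ (Δ : ℤ))
    (p : ℤ → ℝ) (hp : ∀ z, 0 ≤ p z)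
    (hsupp : ∀ z : ℤ, p z ≠ 0 → -(b : ℤ) ≤ z ∧ z ≤ (b : ℤ))
    (hsym : ∀ z : ℤ, p (-z) = p z)
    (G : ℕ → ℝ)
    (hcdf : ∀ z : ℤ, -(b : ℤ) ≤ z → z ≤ 0 →
      (∑ x ∈ Finset.Icc (-(b : ℤ)) z, p x) = G (z + b).toNat) :
    ∀ S : Finset ℤ, (∀ a ∈ S, RD' + (b : ℤ) < a ∧ a ≤ RD + (b : ℤ)) →
      (∑ a ∈ S, p (a - RD')) = 0 ∧ (∑ a ∈ S, p (a - RD)) ≤ G (Δ - 1) := by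
  intro S hS
  have hgap : RD - RD' ≤ Δ := le_of_abs_le hsens
  refine ⟨sum_eq_zero fun a ha => ?_, ?_⟩
  · by_contra hne
    have := (hsupp _ hne).2
    have := (hS a ha).1
    omega
  · calc ∑ a ∈ S, p (a - RD) ≤ ∑ x ∈ Icc ((b : ℤ) - Δ + 1) b, p x :=
          sum_sub_le_sum_Icc hp fun a ha => by have := hS a ha; omega
      _ = G (Δ - 1) := sum_Icc_upper_tail_eq (by omega) hbΔ hsym hcdf

/-- TAP's bounded-noise mechanism, region `A₄ = (R*(D')+b, R*(D)+b]`: using the symmetry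
of `Z`, for any `S ⊆ A₄`, `P(R(D') ∈ S) = 0` and `P(R(D) ∈ S) ≤ P(Z < Δ - b) = G (Δ - 1)`,
i.e. the `(0, G(Δ-1))`-differential-privacy inequality holds on such sets. -/
theorem tap_dp_region_A4 (b Δ : ℕ) (hbΔ : Δ ≤ b)
    (RD RD' : ℤ) (hlt : RD' < RD) (hsens : |RD - RD'| ≤ (Δ : ℤ))
    (p : ℤ → ℝ) (hp : ∀ z, 0 ≤ p z)
    (hsupp : ∀ z : ℤ, p z ≠ 0 → -(b : ℤ) ≤ z ∧ z ≤ (b : ℤ))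
    (hsym : ∀ z : ℤ, p (-z) = p z)
    (g : ℕ → ℝ) (hg : ∀ x, 0 ≤ g x)
    (G : ℕ → ℝ) (hG : ∀ z, G z = ∑ x ∈ Finset.range (z + 1), g x)
    (hnorm : g 0 + 2 * G (b - 1) = 1)
    (hcdf : ∀ z : ℤ, -(b : ℤ) ≤ z → z ≤ 0 →
      (∑ x ∈ Finset.Icc (-(b : ℤ)) z, p x) = G (z + b).toNat) :
    ∀ S : Finset ℤ, (∀ a ∈ S, RD' + (b : ℤ) < a ∧ a ≤ RD + (b : ℤ)) →
      (∑ a ∈ S, p (a - RD')) = 0 ∧ (∑ a ∈ S, p (a - RD)) ≤ G (Δ - 1) :=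
  tap_dp_region_A4_general b Δ hbΔ RD RD' hlt hsens p hp hsupp hsym G hcdf
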